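/- In the free group F₂ on α, β, for every integer n ≥ 2, the number of elements of word length exactly n that are not conjugate to any power of α, β, or αβ equals 4·3^r·(3^(r+1) − 2) if n = 2r+2 and 4·3^r·(3^r − 1) if n = 2r+1. -/

import Mathlib

abbrev F2 := FreeGroup (Fin 2)

def α : F2 := FreeGroup.of 0

def β : F2 := FreeGroup.of 1

/-- Number of pseudo-Anosov-type elements (not conjugate to any power of `α`, `β`,
or `αβ`) of word length exactly `n`. -/
noncomputable def pACount (n : ℕ) : ℕ :=
  Nat.card {g : F2 | FreeGroup.norm g = n ∧
    ¬ ∃ (w : F2) (k : ℤ) (γ : F2), γ ∈ ({α, β, α * β} : Set F2) ∧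
      g = w * γ ^ k * w⁻¹}

/-!
A nontrivial element is conjugate to a power of `α`, `β` or `αβ` exactly when its reduced word is
`U Bˡ U⁻¹` without cancellation, with `ℓ ≥ 1` and `B` one of the eight cyclically reduced words
`a` and `a a'` (`a` a letter, `a'` the letter of the other generator with the same sign):
conjugating `Bˡ` by a letter that cancels against it only rotates `B` into another such block, so
the conjugator can be shortened until nothing cancels. The decomposition is unique, because `U`
and `Bˡ` are the conjugator and the cyclic reduction of the word. Hence the excluded words of
length `n` correspond to a block `B` with `|B| ∣ n` together with a reduced `U` of length
`m < n / 2` whose last letter avoids two letters; there is `1` such `U` for `m = 0` and there are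
`2·3^(m-1)` for `m ≥ 1`, `3^⌊(n-1)/2⌋` in total. This leaves `4·3^(n-1) - 4·3^⌊(n-1)/2⌋` words of
odd length `n` and `4·3^(n-1) - 8·3^⌊(n-1)/2⌋` of even length.
-/

open Finset

namespace FreeGroup

variable {ι : Type*} {U C : List (ι × Bool)}

theorem head?_invRev (U : List (ι × Bool)) :
    (invRev U).head? = U.getLast?.map fun x => (x.1, !x.2) := by
  simp [invRev, List.head?_reverse, List.getLast?_map]

theorem IsReduced.invRev (h : IsReduced U) : IsReduced (FreeGroup.invRev U) := by
  rw [IsReduced, FreeGroup.invRev, List.isChain_reverse, List.isChain_map]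
  exact h.imp fun a b hab hba => by simpa using (hab hba.symm).symm

theorem IsReduced.append_append_invRev (hU : IsReduced U) (hC : IsReduced C) (hne : C ≠ [])
    (hhead : ∀ x ∈ U.getLast?, ∀ c ∈ C.head?, x.1 = c.1 → x.2 = c.2)
    (hlast : ∀ x ∈ U.getLast?, ∀ c ∈ C.getLast?, x ≠ c) :
    IsReduced (U ++ C ++ FreeGroup.invRev U) := by
  refine IsReduced.append_overlap (List.IsChain.append hU hC hhead)
    (List.IsChain.append hC hU.invRev ?_) hne
  intro c hc y hy
  rw [head?_invRev, Option.mem_map] at hy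
  obtain ⟨x, hx, rfl⟩ := hy
  have := hlast x hx c hc
  grind

theorem mk_append_append_invRev (U C : List (ι × Bool)) :
    mk (U ++ C ++ invRev U) = mk U * mk C * (mk U)⁻¹ := by
  rw [inv_mk, mul_mk, mul_mk]

theorem mk_flatten_replicate (L : List (ι × Bool)) (n : ℕ) :
    mk (List.replicate n L).flatten = mk L ^ n := by
  induction n with
  | zero => rfl
  | succ n ih => rw [List.replicate_succ, List.flatten_cons, ← mul_mk, ih, pow_succ']

theorem cons_append_append_invRev_cons (x : ι × Bool) (U C : List (ι × Bool)) :
    (x :: U) ++ C ++ invRev (x :: U) = x :: ((U ++ C ++ invRev U) ++ [(x.1, !x.2)]) := by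
  simp [invRev]

section Conjugator

open reduceCyclically

variable [DecidableEq ι]

theorem IsCyclicallyReduced.conjugator_eq_nil_and_reduceCyclically_eq
    (h : IsCyclicallyReduced C) : conjugator C = [] ∧ reduceCyclically C = C := by
  induction C using List.bidirectionalRec with
  | nil => simp
  | singleton => simp
  | cons_append a L b _ =>
    have hab : b.1 = a.1 → b.2 = a.2 :=
      h.2 b (by rw [← List.cons_append, List.getLast?_concat]; rfl) a rfl
    have hne : ¬ (b.1 = a.1 ∧ (!b.2) = a.2) := by grind
    rw [conjugator.cons_append, reduceCyclically.cons_append, if_neg hne, if_neg hne]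
    simp

theorem IsCyclicallyReduced.conjugator_eq_and_reduceCyclically_eq (h : IsCyclicallyReduced C) :
    ∀ U : List (ι × Bool), conjugator (U ++ C ++ invRev U) = U ∧
      reduceCyclically (U ++ C ++ invRev U) = C
  | [] => by simpa using h.conjugator_eq_nil_and_reduceCyclically_eq
  | x :: U => by
    have hcancel : (x.1, !x.2).1 = x.1 ∧ (!(x.1, !x.2).2) = x.2 := by simp
    rw [cons_append_append_invRev_cons, conjugator.cons_append, reduceCyclically.cons_append,
      if_pos hcancel, if_pos hcancel, (h.conjugator_eq_and_reduceCyclically_eq U).1,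
      (h.conjugator_eq_and_reduceCyclically_eq U).2]
    simp

end Conjugator

theorem append_append_invRev_inj {U' C' : List (ι × Bool)} (hC : IsCyclicallyReduced C)
    (hC' : IsCyclicallyReduced C') (h : U ++ C ++ invRev U = U' ++ C' ++ invRev U') :
    U = U' ∧ C = C' := by
  classical
  obtain ⟨hU, hCU⟩ := hC.conjugator_eq_and_reduceCyclically_eq U
  obtain ⟨hU', hCU'⟩ := hC'.conjugator_eq_and_reduceCyclically_eq U'
  rw [h] at hU hCU
  exact ⟨hU.symm.trans hU', hCU.symm.trans hCU'⟩

instance [DecidableEq ι] : DecidablePred (IsReduced (α := ι)) :=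
  fun L => inferInstanceAs (Decidable (List.IsChain _ L))

theorem isReduced_append_singleton {M : List (ι × Bool)} {x : ι × Bool} :
    IsReduced (M ++ [x]) ↔ IsReduced M ∧ M.getLast? ≠ some (x.1, !x.2) := by
  rw [IsReduced, List.isChain_append]
  cases M.getLast? with
  | none => simp [IsReduced]
  | some y =>
    obtain ⟨a, b⟩ := x; obtain ⟨c, d⟩ := y
    cases b <;> cases d <;> simp [IsReduced]

section Counting

variable [Fintype ι] [DecidableEq ι]

variable (ι) in
def reducedWords (n : ℕ) : Finset (List (ι × Bool)) :=
  {L ∈ univ.image (List.ofFn (n := n)) | IsReduced L}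

theorem mem_reducedWords {n : ℕ} {L : List (ι × Bool)} :
    L ∈ reducedWords ι n ↔ IsReduced L ∧ L.length = n := by
  simp only [reducedWords, mem_filter, mem_image, mem_univ, true_and]
  constructor
  · rintro ⟨⟨f, rfl⟩, h⟩
    exact ⟨h, List.length_ofFn⟩
  · rintro ⟨h, rfl⟩
    exact ⟨⟨_, List.ofFn_getElem⟩, h⟩

theorem reducedWords_zero : reducedWords ι 0 = {([] : List (ι × Bool))} := by
  ext L
  simp only [mem_reducedWords, List.length_eq_zero_iff, mem_singleton, and_iff_right_iff_imp]
  rintro rfl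
  exact .nil

theorem card_eq_sum_card_getLast {S : Finset (List (ι × Bool))} (hS : [] ∉ S) :
    #S = ∑ x, #{L ∈ S | L.getLast? = some x} := by
  rw [card_eq_sum_card_fiberwise (f := List.getLast?) (t := univ) (fun _ _ => mem_univ _),
    Fintype.sum_option, add_eq_right, card_eq_zero, filter_eq_empty_iff]
  intro L hL hnil
  exact hS (List.getLast?_eq_none_iff.mp hnil ▸ hL)

theorem filter_reducedWords_succ_getLast (n : ℕ) (x : ι × Bool) :
    {L ∈ reducedWords ι (n + 1) | L.getLast? = some x} =
      {M ∈ reducedWords ι n | M.getLast? ≠ some (x.1, !x.2)}.image (· ++ [x]) := by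
  ext L
  simp only [mem_filter, mem_image, mem_reducedWords, List.getLast?_eq_some_iff]
  constructor
  · rintro ⟨⟨hL, hlen⟩, M, rfl⟩
    rw [isReduced_append_singleton] at hL
    exact ⟨M, ⟨⟨hL.1, by simpa using hlen⟩, hL.2⟩, rfl⟩
  · rintro ⟨M, ⟨⟨hM, hlen⟩, hlast⟩, rfl⟩
    exact ⟨⟨isReduced_append_singleton.mpr ⟨hM, hlast⟩, by simp [hlen]⟩, M, rfl⟩

theorem nil_notMem_reducedWords_succ (n : ℕ) : [] ∉ reducedWords ι (n + 1) := by
  simp [mem_reducedWords]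

theorem card_reducedWords_getLast (n : ℕ) (x : ι × Bool) :
    #{L ∈ reducedWords ι (n + 1) | L.getLast? = some x} =
      (Fintype.card (ι × Bool) - 1) ^ n := by
  induction n generalizing x with
  | zero =>
    rw [filter_reducedWords_succ_getLast, reducedWords_zero, filter_singleton, if_pos (by simp),
      image_singleton, card_singleton, pow_zero]
  | succ n ih =>
    set N := Fintype.card (ι × Bool)
    have htotal : #(reducedWords ι (n + 1)) = N * (N - 1) ^ n := by
      rw [card_eq_sum_card_getLast (nil_notMem_reducedWords_succ n)]
      simp [ih, N]
    have hsplit := card_filter_add_card_filter_not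
      (s := reducedWords ι (n + 1)) (fun M => M.getLast? = some (x.1, !x.2))
    rw [filter_reducedWords_succ_getLast,
      card_image_of_injective _ (List.append_left_injective [x]), pow_succ', Nat.sub_one_mul,
      ← htotal, ← ih (x.1, !x.2)]
    simp only [ne_eq]
    omega

theorem card_reducedWords_succ (n : ℕ) :
    #(reducedWords ι (n + 1)) =
      Fintype.card (ι × Bool) * (Fintype.card (ι × Bool) - 1) ^ n := by
  rw [card_eq_sum_card_getLast (nil_notMem_reducedWords_succ n)]
  simp [card_reducedWords_getLast]

theorem card_reducedWords_getLast_notMem (n : ℕ) (s : Finset (ι × Bool)) :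
    #{L ∈ reducedWords ι (n + 1) | ∀ x ∈ L.getLast?, x ∉ s} =
      (Fintype.card (ι × Bool) - #s) * (Fintype.card (ι × Bool) - 1) ^ n := by
  rw [card_eq_sum_card_getLast (fun h => nil_notMem_reducedWords_succ n (mem_filter.mp h).1)]
  have hfiber : ∀ x, #{L ∈ {L ∈ reducedWords ι (n + 1) | ∀ y ∈ L.getLast?, y ∉ s} |
      L.getLast? = some x} = if x ∈ s then 0 else (Fintype.card (ι × Bool) - 1) ^ n := by
    intro x
    rw [filter_filter, ← card_reducedWords_getLast n x]
    split_ifs with hx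
    · simp only [card_eq_zero, filter_eq_empty_iff]
      grind
    · congr 1
      refine filter_congr fun L _ => ?_
      grind
  simp only [hfiber, sum_ite, sum_const_zero, sum_const, zero_add, smul_eq_mul]
  rw [filter_not, card_sdiff_of_subset (filter_subset _ _), card_univ]
  simp

theorem sum_card_reducedWords_getLast_notMem (M : ℕ) {s : Finset (ι × Bool)} (hs : #s = 2) :
    ∑ m ∈ range (M + 1), #{L ∈ reducedWords ι m | ∀ x ∈ L.getLast?, x ∉ s} =
      (Fintype.card (ι × Bool) - 1) ^ M := by
  obtain ⟨k, hk⟩ : ∃ k, Fintype.card (ι × Bool) = k + 2 :=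
    ⟨Fintype.card (ι × Bool) - 2, by have := card_le_univ s; omega⟩
  induction M with
  | zero =>
    rw [zero_add, sum_range_one, reducedWords_zero, filter_singleton, if_pos (by simp)]
    rfl
  | succ M ih =>
    rw [sum_range_succ, ih, card_reducedWords_getLast_notMem, hk, hs,
      show k + 2 - 2 = k by omega, show k + 2 - 1 = k + 1 by omega]
    ring

end Counting

end FreeGroup

namespace F2

open FreeGroup

abbrev Letter := Fin 2 × Bool

abbrev Block := Letter × Bool

def otherGen (a : Letter) : Letter := (a.1 + 1, a.2)

-- `α^±1`, `β^±1` and `αβ`, `βα`, `α⁻¹β⁻¹`, `β⁻¹α⁻¹`; the flag selects the two-letter words.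
def block : Block → List Letter
  | (a, false) => [a]
  | (a, true) => [a, otherGen a]

def blockPow (b : Block) (ℓ : ℕ) : List Letter :=
  (List.replicate ℓ (block b)).flatten

-- The last letters of `U` that cancel in `U ++ blockPow b ℓ ++ invRev U`.
def forbiddenLast : Block → Finset Letter
  | (a, false) => {(a.1, !a.2), a}
  | (a, true) => {(a.1, !a.2), otherGen a}

def rotate : Block → Block
  | (a, false) => (a, false)
  | (a, true) => (otherGen a, true)

theorem isCyclicallyReduced_block (b : Block) : IsCyclicallyReduced (block b) := by
  revert b
  unfold IsCyclicallyReduced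
  decide

theorem length_block_dvd_two (b : Block) : (block b).length ∣ 2 := by
  rcases b with ⟨a, _ | _⟩ <;> simp [block]

theorem length_block_pos (b : Block) : 0 < (block b).length := by
  rcases b with ⟨a, _ | _⟩ <;> simp [block]

theorem card_forbiddenLast (b : Block) : #(forbiddenLast b) = 2 := by
  revert b
  decide

theorem length_blockPow (b : Block) (ℓ : ℕ) :
    (blockPow b ℓ).length = ℓ * (block b).length := by
  simp [blockPow]

theorem mem_blockPow {b : Block} {ℓ : ℕ} (hℓ : ℓ ≠ 0) {x : Letter} :
    x ∈ blockPow b ℓ ↔ x ∈ block b := by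
  simp [blockPow, hℓ]

theorem eq_of_blockPow_eq {b b' : Block} {ℓ ℓ' : ℕ} (hℓ : ℓ ≠ 0) (hℓ' : ℓ' ≠ 0)
    (h : blockPow b ℓ = blockPow b' ℓ') : b = b' := by
  have hhead : (block b).head? = (block b').head? := by
    have := congrArg List.head? h
    rwa [blockPow, blockPow, List.head?_flatten_replicate hℓ,
      List.head?_flatten_replicate hℓ'] at this
  have hmem : ∀ x, x ∈ block b ↔ x ∈ block b' := fun x => by
    rw [← mem_blockPow hℓ, ← mem_blockPow hℓ', h]
  have key : ∀ b b' : Block, (block b).head? = (block b').head? →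
      (∀ x, x ∈ block b ↔ x ∈ block b') → b = b' := by
    decide
  exact key b b' hhead hmem

theorem isCyclicallyReduced_blockPow (b : Block) (ℓ : ℕ) :
    IsCyclicallyReduced (blockPow b ℓ) :=
  (isCyclicallyReduced_block b).flatten_replicate ℓ

theorem isReduced_append_blockPow_append_invRev {U : List Letter} {b : Block} {ℓ : ℕ}
    (hU : IsReduced U) (hUb : ∀ x ∈ U.getLast?, x ∉ forbiddenLast b) (hℓ : ℓ ≠ 0) :
    IsReduced (U ++ blockPow b ℓ ++ invRev U) := by
  have hhead : ∀ (x : Letter) (b : Block), x ∉ forbiddenLast b →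
      ∀ c ∈ (block b).head?, x.1 = c.1 → x.2 = c.2 := by
    decide
  have hlast : ∀ (x : Letter) (b : Block), x ∉ forbiddenLast b →
      ∀ c ∈ (block b).getLast?, x ≠ c := by
    decide
  refine hU.append_append_invRev (isCyclicallyReduced_blockPow b ℓ).isReduced ?_ ?_ ?_
  · rw [← List.length_pos_iff, length_blockPow]
    exact Nat.mul_pos (Nat.pos_of_ne_zero hℓ) (length_block_pos b)
  · intro x hx c hc
    rw [blockPow, List.head?_flatten_replicate hℓ] at hc
    exact hhead x b (hUb x hx) c hc
  · intro x hx c hc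
    rw [blockPow, List.getLast?_flatten_replicate hℓ] at hc
    exact hlast x b (hUb x hx) c hc

theorem conj_mk_block_of_mem_forbiddenLast {x : Letter} {b : Block}
    (hx : x ∈ forbiddenLast b) :
    mk [x] * mk (block b) * (mk [x])⁻¹ = mk (block (rotate b)) := by
  have hreduce : ∀ (x : Letter) (b : Block), x ∈ forbiddenLast b →
      reduce ([x] ++ block b ++ invRev [x]) = block (rotate b) := by
    decide
  rw [← mk_append_append_invRev, ← reduce.self, hreduce x b hx]

theorem exists_reduced_conjugator (ℓ : ℕ) (U : List Letter) (hU : IsReduced U) (b : Block) :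
    ∃ U' b', IsReduced U' ∧ (∀ x ∈ U'.getLast?, x ∉ forbiddenLast b') ∧
      mk U * mk (block b) ^ ℓ * (mk U)⁻¹ = mk U' * mk (block b') ^ ℓ * (mk U')⁻¹ := by
  induction U using List.reverseRecOn generalizing b with
  | nil => exact ⟨[], b, .nil, by simp, rfl⟩
  | append_singleton V x ih =>
    by_cases hx : x ∈ forbiddenLast b
    · obtain ⟨U', b', hU', hadm, heq⟩ := ih (List.IsChain.left_of_append hU) (rotate b)
      refine ⟨U', b', hU', hadm, ?_⟩
      rw [← heq, ← conj_mk_block_of_mem_forbiddenLast hx, conj_pow, ← mul_mk]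
      group
    · exact ⟨V ++ [x], b, hU, by simpa using hx, rfl⟩

def IsConjBasicPower (g : F2) : Prop :=
  ∃ (w : F2) (k : ℤ) (γ : F2), γ ∈ ({α, β, α * β} : Set F2) ∧ g = w * γ ^ k * w⁻¹

theorem IsConjBasicPower.conj_zpow {g : F2} (h : IsConjBasicPower g) (v : F2) (k : ℤ) :
    IsConjBasicPower (v * g ^ k * v⁻¹) := by
  obtain ⟨w, j, γ, hγ, rfl⟩ := h
  refine ⟨v * w, j * k, γ, hγ, ?_⟩
  rw [_root_.conj_zpow, zpow_mul]
  group

theorem isConjBasicPower_of_mem {γ : F2} (hγ : γ ∈ ({α, β, α * β} : Set F2)) :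
    IsConjBasicPower γ :=
  ⟨1, 1, γ, hγ, by group⟩

theorem isConjBasicPower_mk_block (b : Block) : IsConjBasicPower (mk (block b)) := by
  have hα : IsConjBasicPower α := isConjBasicPower_of_mem (by simp)
  have hβ : IsConjBasicPower β := isConjBasicPower_of_mem (by simp)
  have hαβ : IsConjBasicPower (α * β) := isConjBasicPower_of_mem (by simp)
  have hβα : IsConjBasicPower (β * α) := by
    simpa [mul_assoc] using hαβ.conj_zpow α⁻¹ 1
  rcases b with ⟨⟨i, s⟩, _ | _⟩ <;> fin_cases i <;> cases s
  · show IsConjBasicPower α⁻¹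
    simpa using hα.conj_zpow 1 (-1)
  · exact hα
  · show IsConjBasicPower β⁻¹
    simpa using hβ.conj_zpow 1 (-1)
  · exact hβ
  · show IsConjBasicPower (α⁻¹ * β⁻¹)
    simpa using hβα.conj_zpow 1 (-1)
  · exact hαβ
  · show IsConjBasicPower (β⁻¹ * α⁻¹)
    simpa using hαβ.conj_zpow 1 (-1)
  · exact hβα

theorem exists_block_of_isConjBasicPower {g : F2} (h : IsConjBasicPower g) :
    ∃ (w : F2) (b : Block) (ℓ : ℕ), g = w * mk (block b) ^ ℓ * w⁻¹ := by
  obtain ⟨w, k, γ, hγ, rfl⟩ := h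
  have hblock : (∃ b, mk (block b) = γ) ∧ ∃ b, mk (block b) = γ⁻¹ := by
    rcases hγ with rfl | rfl | rfl
    · exact ⟨⟨((0, true), false), rfl⟩, ⟨((0, false), false), rfl⟩⟩
    · exact ⟨⟨((1, true), false), rfl⟩, ⟨((1, false), false), rfl⟩⟩
    · exact ⟨⟨((0, true), true), rfl⟩, ⟨((1, false), true), rfl⟩⟩
  obtain ⟨ℓ, rfl | rfl⟩ := Int.eq_nat_or_neg k
  · obtain ⟨b, hb⟩ := hblock.1
    exact ⟨w, b, ℓ, by rw [hb, zpow_natCast]⟩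
  · obtain ⟨b, hb⟩ := hblock.2
    exact ⟨w, b, ℓ, by rw [hb, zpow_neg, zpow_natCast, inv_pow]⟩

def IsBlockConjugate (L : List Letter) : Prop :=
  ∃ b ℓ U, ℓ ≠ 0 ∧ IsReduced U ∧ (∀ x ∈ U.getLast?, x ∉ forbiddenLast b) ∧
    L = U ++ blockPow b ℓ ++ invRev U

noncomputable instance : DecidablePred IsBlockConjugate := Classical.decPred _

theorem isConjBasicPower_iff_isBlockConjugate {g : F2} (hg : g ≠ 1) :
    IsConjBasicPower g ↔ IsBlockConjugate g.toWord := by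
  constructor
  · intro h
    obtain ⟨w, b, ℓ, rfl⟩ := exists_block_of_isConjBasicPower h
    have hℓ : ℓ ≠ 0 := by
      rintro rfl
      simp at hg
    obtain ⟨U, b', hU, hUb, heq⟩ := exists_reduced_conjugator ℓ w.toWord isReduced_toWord b
    refine ⟨b', ℓ, U, hℓ, hU, hUb, ?_⟩
    rw [mk_toWord] at heq
    rw [heq, ← mk_flatten_replicate, ← mk_append_append_invRev, toWord_mk, ← blockPow,
      (isReduced_append_blockPow_append_invRev hU hUb hℓ).reduce_eq]
  · rintro ⟨b, ℓ, U, -, -, -, h⟩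
    rw [← mk_toWord (x := g), h, mk_append_append_invRev, blockPow, mk_flatten_replicate]
    simpa using (isConjBasicPower_mk_block b).conj_zpow (mk U) ℓ

theorem pACount_eq_card_sub_card (n : ℕ) (hn : n ≠ 0) :
    pACount n =
      #(reducedWords (Fin 2) n) - #{L ∈ reducedWords (Fin 2) n | IsBlockConjugate L} := by
  have hset : {g : F2 | FreeGroup.norm g = n ∧ ¬ IsConjBasicPower g} =
      toWord ⁻¹' ↑{L ∈ reducedWords (Fin 2) n | ¬ IsBlockConjugate L} := by
    ext g
    rw [Set.mem_preimage, mem_coe, mem_filter, mem_reducedWords, and_iff_right isReduced_toWord]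
    refine and_congr_right fun hlen => not_congr (isConjBasicPower_iff_isBlockConjugate ?_)
    rintro rfl
    exact hn (hlen ▸ FreeGroup.norm_one)
  have hrange : ↑{L ∈ reducedWords (Fin 2) n | ¬ IsBlockConjugate L} ⊆
      Set.range (toWord (α := Fin 2)) := by
    intro L hL
    simp only [coe_filter, mem_reducedWords, Set.mem_ofPred_eq] at hL
    exact ⟨mk L, by rw [toWord_mk, hL.1.1.reduce_eq]⟩
  change Nat.card {g : F2 | FreeGroup.norm g = n ∧ ¬ IsConjBasicPower g} = _
  rw [hset, Nat.card_coe_set_eq, Set.ncard_preimage_of_injective_subset_range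
    toWord_injective hrange, Set.ncard_coe_finset, filter_not,
    card_sdiff_of_subset (filter_subset _ _)]

-- `((b, m), U)` with `U.length = m`; the exponent of the block is forced by the length `n`.
def blockConjParams (n : ℕ) : Finset (Σ _ : Block × ℕ, List Letter) :=
  (({b | (block b).length ∣ n} : Finset _) ×ˢ range ((n + 1) / 2)).sigma fun bm =>
    {U ∈ reducedWords (Fin 2) bm.2 | ∀ x ∈ U.getLast?, x ∉ forbiddenLast bm.1}

def blockConjWord (n : ℕ) (p : Σ _ : Block × ℕ, List Letter) : List Letter :=
  p.2 ++ blockPow p.1.1 ((n - 2 * p.1.2) / (block p.1.1).length) ++ invRev p.2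

theorem card_blockConjParams {n : ℕ} (hn : n ≠ 0) :
    #(blockConjParams n) = #{b : Block | (block b).length ∣ n} * 3 ^ ((n - 1) / 2) := by
  have hsum : ∀ b, ∑ m ∈ range ((n + 1) / 2),
      #{U ∈ reducedWords (Fin 2) m | ∀ x ∈ U.getLast?, x ∉ forbiddenLast b} =
        3 ^ ((n - 1) / 2) := by
    intro b
    rw [show (n + 1) / 2 = (n - 1) / 2 + 1 by omega,
      sum_card_reducedWords_getLast_notMem _ (card_forbiddenLast b)]
    rfl
  rw [blockConjParams, card_sigma, sum_product, sum_congr rfl fun b _ => hsum b, sum_const,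
    smul_eq_mul]

theorem div_length_block_ne_zero_and_mul_eq {b : Block} {n m : ℕ}
    (hdvd : (block b).length ∣ n) (hm : 2 * m < n) :
    (n - 2 * m) / (block b).length ≠ 0 ∧
      (n - 2 * m) / (block b).length * (block b).length = n - 2 * m := by
  have h : (block b).length ∣ n - 2 * m :=
    Nat.dvd_sub hdvd (Dvd.dvd.mul_right (length_block_dvd_two b) m)
  exact ⟨(Nat.div_pos (Nat.le_of_dvd (by omega) h) (length_block_pos b)).ne',
    Nat.div_mul_cancel h⟩

theorem mem_blockConjParams {n : ℕ} {b : Block} {m : ℕ} {U : List Letter} :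
    ⟨(b, m), U⟩ ∈ blockConjParams n ↔ ((block b).length ∣ n ∧ 2 * m < n) ∧
      (IsReduced U ∧ U.length = m) ∧ ∀ x ∈ U.getLast?, x ∉ forbiddenLast b := by
  simp only [blockConjParams, mem_sigma, mem_product, mem_filter, mem_univ, true_and, mem_range,
    mem_reducedWords, show m < (n + 1) / 2 ↔ 2 * m < n by omega]

theorem card_filter_isBlockConjugate (n : ℕ) :
    #{L ∈ reducedWords (Fin 2) n | IsBlockConjugate L} = #(blockConjParams n) := by
  refine (card_nbij (blockConjWord n) ?_ ?_ ?_).symm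
  · rintro ⟨⟨b, m⟩, U⟩ hp
    obtain ⟨⟨hdvd, hm⟩, ⟨hU, rfl⟩, hUb⟩ := mem_blockConjParams.mp hp
    obtain ⟨hℓ, hlen⟩ := div_length_block_ne_zero_and_mul_eq hdvd hm
    simp only [coe_filter, Set.mem_ofPred_eq, mem_reducedWords, blockConjWord]
    refine ⟨⟨isReduced_append_blockPow_append_invRev hU hUb hℓ, ?_⟩,
      _, _, U, hℓ, hU, hUb, rfl⟩
    simp only [List.length_append, length_blockPow, invRev_length, hlen]
    omega
  · rintro ⟨⟨b, m⟩, U⟩ hp ⟨⟨b', m'⟩, U'⟩ hp' h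
    obtain ⟨⟨hdvd, hm⟩, ⟨-, rfl⟩, -⟩ := mem_blockConjParams.mp hp
    obtain ⟨⟨hdvd', hm'⟩, ⟨-, rfl⟩, -⟩ := mem_blockConjParams.mp hp'
    obtain ⟨rfl, hpow⟩ := append_append_invRev_inj (isCyclicallyReduced_blockPow _ _)
      (isCyclicallyReduced_blockPow _ _) h
    obtain rfl := eq_of_blockPow_eq (div_length_block_ne_zero_and_mul_eq hdvd hm).1
      (div_length_block_ne_zero_and_mul_eq hdvd' hm').1 hpow
    rfl
  · rintro L hL
    simp only [coe_filter, Set.mem_ofPred_eq, mem_reducedWords] at hL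
    obtain ⟨⟨-, hlen⟩, b, ℓ, U, hℓ, hU, hUb, rfl⟩ := hL
    have hlen' : 2 * U.length + ℓ * (block b).length = n := by
      simp only [List.length_append, length_blockPow, invRev_length] at hlen
      omega
    have hpos : 0 < ℓ * (block b).length :=
      Nat.mul_pos (Nat.pos_of_ne_zero hℓ) (length_block_pos b)
    refine ⟨⟨(b, U.length), U⟩, mem_blockConjParams.mpr ⟨⟨?_, by omega⟩, ⟨hU, rfl⟩, hUb⟩, ?_⟩
    · rw [← hlen']
      exact Dvd.dvd.add (Dvd.dvd.mul_right (length_block_dvd_two b) _) (Dvd.intro_left _ rfl)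
    · rw [blockConjWord, ← hlen', Nat.add_sub_cancel_left,
        Nat.mul_div_cancel _ (length_block_pos b)]

theorem card_filter_length_block_dvd (n : ℕ) :
    #{b : Block | (block b).length ∣ n} = if 2 ∣ n then 8 else 4 := by
  have hdvd : ∀ b : Block, (block b).length ∣ n ↔ (b.2 = true → 2 ∣ n) := by
    rintro ⟨a, _ | _⟩ <;> simp [block]
  rw [filter_congr fun b _ => hdvd b]
  split_ifs with h <;> simp only [h, imp_false, Bool.not_eq_true] <;> decide

theorem pACount_eq (n : ℕ) (hn : n ≠ 0) :
    pACount n = 4 * 3 ^ (n - 1) - (if 2 ∣ n then 8 else 4) * 3 ^ ((n - 1) / 2) := by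
  obtain ⟨m, rfl⟩ := Nat.exists_eq_succ_of_ne_zero hn
  rw [pACount_eq_card_sub_card _ hn, card_filter_isBlockConjugate, card_blockConjParams hn,
    card_filter_length_block_dvd, card_reducedWords_succ]
  simp

end F2

/-- The number of pseudo-Anosov-type elements of word length `2r+2` is
`4·3^r·(3^(r+1) − 2)`, and of word length `2r+1` (with `r ≥ 1`) is
`4·3^r·(3^r − 1)`. -/
theorem pACount_formula :
    (∀ r : ℕ, pACount (2 * r + 2) = 4 * 3 ^ r * (3 ^ (r + 1) - 2)) ∧
    (∀ r : ℕ, 1 ≤ r → pACount (2 * r + 1) = 4 * 3 ^ r * (3 ^ r - 1)) := by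
  refine ⟨fun r => ?_, fun r _ => ?_⟩
  · rw [F2.pACount_eq _ (by omega), if_pos (by omega), Nat.mul_sub,
      show (2 * r + 2 - 1) / 2 = r by omega, show 2 * r + 2 - 1 = r + (r + 1) by omega, pow_add]
    congr 1 <;> ring
  · rw [F2.pACount_eq _ (by omega), if_neg (by omega), Nat.mul_sub,
      show (2 * r + 1 - 1) / 2 = r by omega, show 2 * r + 1 - 1 = r + r by omega, pow_add]
    congr 1 <;> ring
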